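/- In a recollement situation, if A is an object of A with i^!A = 0, then the unit η_A: A → j_*j*A is a monomorphism and its cokernel lies in the essential image of i_*. If moreover A has enough injectives, there is a short exact sequence 0 → A → j_*j*A → i_*(R^1 i^!)A → 0. -/

import Mathlib

open CategoryTheory Limits

universe v u v' u' v'' u''

/-- A recollement situation of abelian categories `A'`, `A`, `A''`. -/
structure Recollement (A' : Type u') (A : Type u) (A'' : Type u'')
    [Category.{v'} A'] [Category.{v} A] [Category.{v''} A'']
    [Abelian A'] [Abelian A] [Abelian A''] where
  /-- the functor `i^* : A → A'` -/
  iStar : A ⥤ A'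
  /-- the functor `i_* : A' → A` -/
  iLower : A' ⥤ A
  /-- the functor `i^! : A → A'` -/
  iShriek : A ⥤ A'
  /-- the functor `j_! : A'' → A` -/
  jShriek : A'' ⥤ A
  /-- the functor `j^* : A → A''` -/
  jStar : A ⥤ A''
  /-- the functor `j_* : A'' → A` -/
  jLower : A'' ⥤ A
  iStar_additive : iStar.Additive
  iLower_additive : iLower.Additive
  iShriek_additive : iShriek.Additive
  jShriek_additive : jShriek.Additive
  jStar_additive : jStar.Additive
  jLower_additive : jLower.Additive
  /-- `j_!` is left adjoint to `j^*` -/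
  adj₁ : jShriek ⊣ jStar
  /-- `j^*` is left adjoint to `j_*` -/
  adj₂ : jStar ⊣ jLower
  /-- `i^*` is left adjoint to `i_*` -/
  adj₃ : iStar ⊣ iLower
  /-- `i_*` is left adjoint to `i^!` -/
  adj₄ : iLower ⊣ iShriek
  /-- the unit `Id → j^* j_!` is an isomorphism -/
  isIso_adj₁_unit : IsIso adj₁.unit
  /-- the counit `j^* j_* → Id` is an isomorphism -/
  isIso_adj₂_counit : IsIso adj₂.counit
  /-- the counit `i^* i_* → Id` is an isomorphism -/
  isIso_adj₃_counit : IsIso adj₃.counit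
  /-- the unit `Id → i^! i_*` is an isomorphism -/
  isIso_adj₄_unit : IsIso adj₄.unit
  iLower_full : iLower.Full
  iLower_faithful : iLower.Faithful
  /-- `i_*` is an embedding onto the full subcategory of objects killed by `j^*` -/
  essImage_iLower : ∀ (X : A), iLower.essImage X ↔ IsZero (jStar.obj X)

attribute [instance] Recollement.iStar_additive Recollement.iLower_additive
  Recollement.iShriek_additive Recollement.jShriek_additive Recollement.jStar_additive
  Recollement.jLower_additive Recollement.isIso_adj₁_unit Recollement.isIso_adj₂_counit
  Recollement.isIso_adj₃_counit Recollement.isIso_adj₄_unit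
  Recollement.iLower_full Recollement.iLower_faithful

variable {A' : Type u'} {A : Type u} {A'' : Type u''}
    [Category.{v'} A'] [Category.{v} A] [Category.{v''} A'']
    [Abelian A'] [Abelian A] [Abelian A'']

namespace Recollement

/-- The norm `N : j_! ⟶ j_*`, whose component at `X` corresponds to the identity of `X`
under `Hom(j_!X, j_*X) ≅ Hom(X, j^*j_*X) ≅ Hom(X, X)`. -/
noncomputable def norm (R : Recollement A' A A'') : R.jShriek ⟶ R.jLower where
  app X := (R.adj₁.homEquiv X (R.jLower.obj X)).symm (inv (R.adj₂.counit.app X))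
  naturality {X Y} f := by
    have h : f ≫ inv (R.adj₂.counit.app Y) =
        inv (R.adj₂.counit.app X) ≫ R.jStar.map (R.jLower.map f) := by
      rw [← cancel_mono (R.adj₂.counit.app Y)]
      have := R.adj₂.counit.naturality f
      simp only [Functor.comp_map, Functor.id_map] at this
      simp [this]
    rw [← Adjunction.homEquiv_naturality_left_symm, h,
      Adjunction.homEquiv_naturality_right_symm]

/-- The intermediate extension `j_!* := Im (N : j_! → j_*)`. -/
noncomputable def jMid (R : Recollement A' A A'') : A'' ⥤ A where
  obj X := image (R.norm.app X)
  map {X Y} f := image.map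
    ((Arrow.homMk _ _ (R.norm.naturality f) :
      Arrow.mk (R.norm.app X) ⟶ Arrow.mk (R.norm.app Y)))
  map_id X := by
    have : (Arrow.homMk _ _ (R.norm.naturality (𝟙 X)) :
        Arrow.mk (R.norm.app X) ⟶ Arrow.mk (R.norm.app X)) = 𝟙 (Arrow.mk (R.norm.app X)) := by
      ext <;> simp
    rw [this, image.map_id]
    rfl
  map_comp {X Y Z} f g := by
    rw [← image.map_comp]
    congr 1
    ext <;> simp

end Recollement

/-!
Since `j^*η` is an isomorphism, `ker η` and `coker η` are killed by the exact functor `j^*`, so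
they lie in the essential image of `i_*`; a map `i_*T ⟶ X` is adjoint to `T ⟶ i^!X = 0`, hence
`ker η = 0`.

For the derived functor, factor a monomorphism `X ⟶ I` into an injective as
`X ⟶ j_*j^*X ⟶ I`. The functor `i^!` inverts `I ⟶ I / j_*j^*X`: by the snake lemma `ker η_I`
is the kernel of `I / j_*j^*X ⟶ j_*j^*I / j_*j^*X`, whose target embeds into some `j_*Y` and is
therefore killed by `i^!`. Consequently `i^!(I/X) ≅ i^!(coker η) ⊕ i^!I`, and
`R^1 i^! X = coker (i^!I ⟶ i^!(I/X)) ≅ i^!(coker η)`, which `i_*` carries back to `coker η`.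
-/

namespace CategoryTheory

variable {C : Type*} [Category C] [Abelian C]

namespace kernelCokernelCompSequence

variable {X Y Z : C} (f : X ⟶ Y) (g : Y ⟶ Z)

lemma δ_comp_cokernel_map : δ f g ≫ cokernel.map f (f ≫ g) (𝟙 _) g (by simp) = 0 :=
  (kernelCokernelCompSequence_exact f g).toIsComplex.zero 2

noncomputable def isLimitδ [Mono (f ≫ g)] :
    IsLimit (KernelFork.ofι (δ f g) (δ_comp_cokernel_map f g)) := by
  have hS := kernelCokernelCompSequence_exact f g
  have : Mono ((kernelCokernelCompSequence f g).sc hS.toIsComplex 2).f :=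
    (hS.exact 1).mono_g ((isZero_kernel_of_mono (f ≫ g)).eq_of_src _ _)
  exact (hS.exact 2 _).fIsKernel

lemma cokernel_map_comp_cokernel_map :
    cokernel.map f (f ≫ g) (𝟙 _) g (by simp) ≫
      cokernel.map (f ≫ g) g f (𝟙 _) (by simp) = 0 :=
  (kernelCokernelCompSequence_exact f g).toIsComplex.zero 3

noncomputable def isLimitCokernelMap [Mono g] :
    IsLimit (KernelFork.ofι _ (cokernel_map_comp_cokernel_map f g)) := by
  have hS := kernelCokernelCompSequence_exact f g
  have : Mono ((kernelCokernelCompSequence f g).sc hS.toIsComplex 3).f :=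
    (hS.exact 2).mono_g ((isZero_kernel_of_mono g).eq_of_src _ _)
  exact (hS.exact 3 _).fIsKernel

end kernelCokernelCompSequence

noncomputable def cokernelIsoOfIsLimitOfIsIsoComp {K M N P : C} {k : K ⟶ M} {g : M ⟶ N}
    {w : k ≫ g = 0} (hk : IsLimit (KernelFork.ofι k w)) (s : P ⟶ M) [IsIso (s ≫ g)] :
    cokernel s ≅ K :=
  -- `σ` is a section of `g`; the retraction of the resulting splitting is a cokernel of `σ`.
  let σ := inv (s ≫ g) ≫ s
  let split := ShortComplex.Splitting.ofExactOfSection (ShortComplex.mk k g w)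
    (ShortComplex.exact_of_f_is_kernel _ hk) σ (by simp [σ]) (mono_of_isLimit_fork hk)
  have hr : IsColimit (CokernelCofork.ofπ split.r split.s_r) :=
    CokernelCofork.IsColimit.ofπ _ _ (fun t _ ↦ k ≫ t)
      (fun t ht ↦ by
        rw [← Category.assoc, split.r_f, Preadditive.sub_comp, Category.assoc, ht]; simp)
      (fun t _ m hm ↦ by simp [← hm, ← Category.assoc, split.f_r])
  (cokernelEpiComp (inv (s ≫ g)) s).symm ≪≫
    (cokernelIsCokernel σ).coconePointUniqueUpToIso hr

variable {D : Type*} [Category D] [Abelian D]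

noncomputable def Functor.cokernelMapCokernelπCompIso (F : C ⥤ D) [F.Additive]
    [PreservesFiniteLimits F] {X Y Z : C} (f : X ⟶ Y) (g : Y ⟶ Z) [Mono g]
    [IsIso (F.map (cokernel.π g))] :
    cokernel (F.map (cokernel.π (f ≫ g))) ≅ F.obj (cokernel f) :=
  have : IsIso (F.map (cokernel.π (f ≫ g)) ≫
      F.map (cokernel.map (f ≫ g) g f (𝟙 _) (by simp))) := by
    rw [← F.map_comp, cokernel.π_desc, Category.id_comp]; infer_instance
  cokernelIsoOfIsLimitOfIsIsoComp (k := F.map _) (w := KernelFork.map_condition _ F)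
    (KernelFork.mapIsLimit _ (kernelCokernelCompSequence.isLimitCokernelMap f g) F) _

noncomputable def ShortComplex.homologyIsoCokernelOfFac {S : ShortComplex C} {Q : C}
    (p : S.X₁ ⟶ Q) {i : Q ⟶ S.X₂} {wi : i ≫ S.g = 0} (hi : IsLimit (KernelFork.ofι i wi))
    (hf : p ≫ i = S.f) : S.homology ≅ cokernel p := by
  have hp : hi.lift (KernelFork.ofι S.f S.zero) = p :=
    Fork.IsLimit.hom_ext hi ((Fork.IsLimit.lift_ι hi).trans hf.symm)
  subst hp
  exact LeftHomologyData.homologyIso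
    { K := Q, H := _, i := i, π := cokernel.π _, wi := wi, hi := hi
      wπ := cokernel.condition _, hπ := cokernelIsCokernel _ }

namespace InjectiveResolution

variable {X : C} (P : InjectiveResolution X)

lemma cokernel_desc_comp_d : cokernel.desc (P.ι.f 0) (P.cocomplex.d 0 1)
    P.ι_f_zero_comp_complex_d ≫ P.cocomplex.d 1 2 = 0 := by
  rw [← cancel_epi (cokernel.π _), cokernel.π_desc_assoc, comp_zero]
  exact P.cocomplex.d_comp_d 0 1 2

noncomputable def isLimitCokernelDesc :
    IsLimit (KernelFork.ofι _ P.cokernel_desc_comp_d) := by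
  have : Mono (cokernel.desc (P.ι.f 0) (P.cocomplex.d 0 1) P.ι_f_zero_comp_complex_d) :=
    (ShortComplex.exact_of_f_is_kernel (ShortComplex.mk _ _ P.ι_f_zero_comp_complex_d)
      P.isLimitKernelFork).mono_cokernelDesc
  let φ : ShortComplex.mk _ _ (P.cocomplex.d_comp_d 0 1 2) ⟶
      ShortComplex.mk _ _ P.cokernel_desc_comp_d :=
    { τ₁ := cokernel.π _, τ₂ := 𝟙 _, τ₃ := 𝟙 _
      comm₁₂ := (cokernel.π_desc _ _ _).trans (Category.comp_id _).symm }
  exact ((ShortComplex.exact_iff_of_epi_of_isIso_of_mono φ).1 (P.exact_succ 0)).fIsKernel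

variable (F : C ⥤ D) [F.Additive] [PreservesFiniteLimits F]

noncomputable def rightDerivedOneIsoCokernel [HasInjectiveResolutions C] :
    (F.rightDerived 1).obj X ≅ cokernel (F.map (cokernel.π (P.ι.f 0))) :=
  P.isoRightDerivedObj F 1 ≪≫
    HomologicalComplex.homologyIsoSc' _ 0 1 2 (by simp) (by simp) ≪≫
    ShortComplex.homologyIsoCokernelOfFac _ (i := F.map _) (wi := KernelFork.map_condition _ F)
      (KernelFork.mapIsLimit _ P.isLimitCokernelDesc F)
      ((F.map_comp _ _).symm.trans (congrArg F.map (cokernel.π_desc _ _ _)))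

end InjectiveResolution

lemma ShortComplex.shortExact_of_cokernelIso {X Y Z : C} (f : X ⟶ Y) [Mono f]
    (e : cokernel f ≅ Z) :
    (ShortComplex.mk f (cokernel.π f ≫ e.hom) (by simp)).ShortExact :=
  shortExact_of_iso (S₁ := cokernelSequence f) (isoMk (Iso.refl _) (Iso.refl _) e
    ((Category.id_comp _).trans (Category.comp_id _).symm) (Category.id_comp _))
    (.mk' (cokernelSequence_exact f) ‹_› inferInstance)

end CategoryTheory

namespace Recollement

variable (R : Recollement A' A A'')

instance : R.iShriek.IsRightAdjoint := R.adj₄.isRightAdjoint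
instance : R.jStar.IsRightAdjoint := R.adj₁.isRightAdjoint
instance : R.jStar.IsLeftAdjoint := R.adj₂.isLeftAdjoint
instance : R.jLower.IsRightAdjoint := R.adj₂.isRightAdjoint
instance : R.jLower.Full := R.adj₂.fullyFaithfulROfIsIsoCounit.full
instance : R.jLower.Faithful := R.adj₂.fullyFaithfulROfIsIsoCounit.faithful

lemma isZero_jStar_obj_iLower_obj (T : A') : IsZero (R.jStar.obj (R.iLower.obj T)) :=
  (R.essImage_iLower _).1 (R.iLower.obj_mem_essImage T)

lemma isZero_iShriek_obj_jLower_obj (Y : A'') : IsZero (R.iShriek.obj (R.jLower.obj Y)) := by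
  rw [IsZero.iff_id_eq_zero]
  apply (R.adj₄.homEquiv _ _).symm.injective
  apply (R.adj₂.homEquiv _ _).symm.injective
  exact (R.isZero_jStar_obj_iLower_obj _).eq_of_src _ _

lemma isZero_iShriek_of_mono {Z : A} {Y : A''} (m : Z ⟶ R.jLower.obj Y) [Mono m] :
    IsZero (R.iShriek.obj Z) :=
  IsZero.of_mono (R.iShriek.map m) (R.isZero_iShriek_obj_jLower_obj Y)

lemma isZero_iShriek_obj_cokernel_of_mono {Y Y' : A''} (m : R.jLower.obj Y ⟶ R.jLower.obj Y')
    [Mono m] : IsZero (R.iShriek.obj (cokernel m)) := by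
  obtain ⟨e, rfl⟩ := R.jLower.map_surjective m
  have : Mono e := R.jLower.mono_of_mono_map ‹_›
  have : Mono (cokernel.desc (R.jLower.map e) (R.jLower.map (cokernel.π e))
      (by rw [← Functor.map_comp, cokernel.condition, Functor.map_zero])) :=
    ((ShortComplex.cokernelSequence_exact e).map_of_mono_of_preservesKernel R.jLower
      ‹Mono e› inferInstance).mono_cokernelDesc
  exact R.isZero_iShriek_of_mono
    (cokernel.desc (R.jLower.map e) (R.jLower.map (cokernel.π e)) _)

lemma eq_zero_of_isZero_iShriek {Z : A} (hZ : IsZero (R.iShriek.obj Z)) {T : A'}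
    (φ : R.iLower.obj T ⟶ Z) : φ = 0 :=
  (R.adj₄.homEquiv _ _).injective (hZ.eq_of_tgt _ _)

lemma mono_of_mono_jStar_map {Z Z' : A} (σ : Z ⟶ Z') (hZ : IsZero (R.iShriek.obj Z))
    [Mono (R.jStar.map σ)] : Mono σ := by
  obtain ⟨T, ⟨e⟩⟩ := (R.essImage_iLower _).2
    (KernelFork.IsLimit.isZero_of_mono (KernelFork.mapIsLimit _ (kernelIsKernel σ) R.jStar))
  refine Abelian.mono_of_kernel_ι_eq_zero _ ?_
  exact (cancel_epi e.hom).1 ((R.eq_zero_of_isZero_iShriek hZ _).trans comp_zero.symm)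

instance isIso_jStar_map_unit_app (X : A) : IsIso (R.jStar.map (R.adj₂.unit.app X)) :=
  isIso_of_comp_hom_eq_id _ (R.adj₂.left_triangle_components X)

lemma mono_unit_app {X : A} (hX : IsZero (R.iShriek.obj X)) : Mono (R.adj₂.unit.app X) :=
  R.mono_of_mono_jStar_map _ hX

lemma essImage_cokernel_unit_app (X : A) : R.iLower.essImage (cokernel (R.adj₂.unit.app X)) :=
  (R.essImage_iLower _).2
    ((isZero_cokernel_of_epi _).of_iso (PreservesCokernel.iso R.jStar _))

lemma isIso_iShriek_map_cokernel_π {Y : A''} {I : A} (u : R.jLower.obj Y ⟶ I) [Mono u] :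
    IsIso (R.iShriek.map (cokernel.π u)) := by
  -- Up to sign `δ u g` is `kernel.ι g ≫ cokernel.π u`; `i^!` inverts it, so `i^!` of
  -- `cokernel.π u` is split epi.
  let g := R.adj₂.unit.app I
  have : Mono (R.jStar.map (u ≫ g)) := by rw [Functor.map_comp]; infer_instance
  have : Mono (u ≫ g) := R.mono_of_mono_jStar_map _ (R.isZero_iShriek_obj_jLower_obj Y)
  have : IsIso (R.iShriek.map (kernelCokernelCompSequence.δ u g)) :=
    KernelFork.IsLimit.isIso_ι _
      (KernelFork.mapIsLimit _ (kernelCokernelCompSequence.isLimitδ u g) R.iShriek)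
      ((R.isZero_iShriek_obj_cokernel_of_mono (u ≫ g)).eq_of_tgt _ _)
  have : Mono (R.iShriek.map (cokernel.π u)) :=
    ((ShortComplex.cokernelSequence_exact u).map_of_mono_of_preservesKernel R.iShriek
      ‹Mono u› inferInstance).mono_g ((R.isZero_iShriek_obj_jLower_obj Y).eq_of_src _ _)
  have : Epi (R.iShriek.map (cokernel.π u)) :=
    epi_of_epi_fac (f := -R.iShriek.map (kernel.ι g))
      (h := R.iShriek.map (kernelCokernelCompSequence.δ u g))
      (by rw [kernelCokernelCompSequence.δ_fac]; simp)
  exact isIso_of_mono_of_epi _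

noncomputable def rightDerivedOneIShriekObjIso [EnoughInjectives A] {X : A}
    (hX : IsZero (R.iShriek.obj X)) :
    (R.iShriek.rightDerived 1).obj X ≅ R.iShriek.obj (cokernel (R.adj₂.unit.app X)) := by
  have := R.mono_unit_app hX
  let P := InjectiveResolution.of X
  let f : X ⟶ P.cocomplex.X 0 := P.ι.f 0
  let u := Injective.factorThru f (R.adj₂.unit.app X)
  have hu : R.adj₂.unit.app X ≫ u = f := Injective.comp_factorThru _ _
  have : Mono f := inferInstanceAs (Mono (P.ι.f 0))
  have : Mono (R.jStar.map u) := by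
    rw [← mono_comp_iff_of_isIso (R.jStar.map (R.adj₂.unit.app X)), ← Functor.map_comp, hu]
    infer_instance
  have : Mono u := R.mono_of_mono_jStar_map _ (R.isZero_iShriek_obj_jLower_obj _)
  have := R.isIso_iShriek_map_cokernel_π u
  refine P.rightDerivedOneIsoCokernel R.iShriek ≪≫ ?_
  change cokernel (R.iShriek.map (cokernel.π f)) ≅ _
  rw [← hu]
  exact R.iShriek.cokernelMapCokernelπCompIso _ _

end Recollement

/-- If `i^!A = 0` then the unit `η_A : A → j_*j^*A` is mono with cokernel in the
essential image of `i_*`; with enough injectives there is a short exact sequence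
`0 → A → j_*j^*A → i_*(R^1 i^!)A → 0`. -/
theorem recollement_unit_mono_of_iShriek_isZero (R : Recollement A' A A'')
    (X : A) (hX : IsZero (R.iShriek.obj X)) :
    Mono (R.adj₂.unit.app X) ∧
    R.iLower.essImage (cokernel (R.adj₂.unit.app X)) ∧
    (∀ [EnoughInjectives A],
      ∃ (π : R.jLower.obj (R.jStar.obj X) ⟶ R.iLower.obj ((R.iShriek.rightDerived 1).obj X))
        (w : R.adj₂.unit.app X ≫ π = 0),
        (ShortComplex.mk _ _ w).ShortExact) := by
  have hη := R.mono_unit_app hX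
  have hC := R.essImage_cokernel_unit_app X
  refine ⟨hη, hC, fun {_} ↦ ?_⟩
  have := R.adj₄.isIso_counit_app_iff_mem_essImage.2 hC
  let χ : cokernel (R.adj₂.unit.app X) ≅ R.iLower.obj ((R.iShriek.rightDerived 1).obj X) :=
    (asIso (R.adj₄.counit.app (cokernel (R.adj₂.unit.app X)))).symm ≪≫
      R.iLower.mapIso (R.rightDerivedOneIShriekObjIso hX).symm
  exact ⟨_, _, ShortComplex.shortExact_of_cokernelIso _ χ⟩
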